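/- Let k be an algebraically closed field and A = kQ/⟨P⟩ a gentle algebra with Q connected and not the Kronecker quiver. Then: (1) N(A) is a normal subgroup of Aut_*^l(A); (2) S(Q1) ∩ N(A) = {id_A}; (3) every f ∈ Aut_*^l(A) can be written as f = h ∘ g with h ∈ N(A) and g ∈ S(Q1), so Aut_*^l(A) = S(Q1) ⋉ N(A); and (4) S(Q1) is isomorphic as a group to the direct product (k*)^{#Q1}, via the map sending (c_α)_{α∈Q1} to the automorphism determined by α ↦ c_α·α. -/

import Mathlib

open scoped Classical

namespace GentlePaper

/-- A finite quiver. -/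
structure Quiv where
  V : Type
  A : Type
  [fintV : Fintype V]
  [fintA : Fintype A]
  [decV : DecidableEq V]
  [decA : DecidableEq A]
  src : A → V
  tgt : A → V

attribute [instance] Quiv.fintV Quiv.fintA Quiv.decV Quiv.decA

/-- A set of relations of length two: `P a b` means that the length-two path
"first `a`, then `b`" (i.e. the composition `b∘a`) belongs to `P`. -/
abbrev Rels (Q : Quiv) := Q.A → Q.A → Prop

/-- Connectedness of a quiver (as an undirected graph). -/
def Connected (Q : Quiv) : Prop :=
  Nonempty Q.V ∧ ∀ v w : Q.V, Relation.ReflTransGen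
    (fun x y => ∃ a : Q.A, (Q.src a = x ∧ Q.tgt a = y) ∨ (Q.src a = y ∧ Q.tgt a = x)) v w

/-- The number of cycles `c(Q) = #Q₁ - #Q₀ + 1` of a connected quiver. -/
def cQ (Q : Quiv) : ℕ := Fintype.card Q.A + 1 - Fintype.card Q.V

/-- The conditions for `kQ/⟨P⟩` to be a gentle algebra. -/
structure IsGentle (Q : Quiv) (P : Rels Q) : Prop where
  rel_comp : ∀ a b : Q.A, P a b → Q.tgt a = Q.src b
  src_le_two : ∀ v : Q.V, Fintype.card {a : Q.A // Q.src a = v} ≤ 2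
  tgt_le_two : ∀ v : Q.V, Fintype.card {a : Q.A // Q.tgt a = v} ≤ 2
  nonrel_succ_unique : ∀ b c c' : Q.A, Q.src c = Q.tgt b → Q.src c' = Q.tgt b →
    ¬ P b c → ¬ P b c' → c = c'
  nonrel_pred_unique : ∀ b a a' : Q.A, Q.tgt a = Q.src b → Q.tgt a' = Q.src b →
    ¬ P a b → ¬ P a' b → a = a'
  rel_succ_unique : ∀ b c c' : Q.A, P b c → P b c' → c = c'
  rel_pred_unique : ∀ b a a' : Q.A, P a b → P a' b → a = a'
  bounded : ∃ N : ℕ, ∀ l : List Q.A,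
    List.Chain' (fun a b => Q.tgt a = Q.src b) l → l.length = N →
      ∃ (l₁ : List Q.A) (a b : Q.A) (l₂ : List Q.A), l = l₁ ++ a :: b :: l₂ ∧ P a b

/-- Paths of a quiver: either a trivial path at a vertex, or a nonempty list of
composable arrows, recorded in traversal order. -/
def Pth (Q : Quiv) := Q.V ⊕ List Q.A

/-- Two arrows are composable (first `a` then `b`) and do not form a relation. -/
def permPair (Q : Quiv) (P : Rels Q) (a b : Q.A) : Prop := Q.tgt a = Q.src b ∧ ¬ P a b

/-- Two arrows are composable (first `a` then `b`) and form a relation. -/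
def forbPair (Q : Quiv) (P : Rels Q) (a b : Q.A) : Prop := Q.tgt a = Q.src b ∧ P a b

/-- "Nonzero path" in `kQ/⟨P⟩`: a trivial path, or a nonempty composable sequence of
arrows having no length-two subpath in `P`.  For nonempty lists this is exactly the
notion of a permitted path. -/
def pthOk (Q : Quiv) (P : Rels Q) : Pth Q → Prop
  | Sum.inl _ => True
  | Sum.inr l => l ≠ [] ∧ List.Chain' (permPair Q P) l

/-- Start vertex of a path/thread. -/
def thStart (Q : Quiv) : Pth Q → Option Q.V
  | Sum.inl v => some v
  | Sum.inr l => l.head?.map Q.src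

/-- End vertex of a path/thread. -/
def thEnd (Q : Quiv) : Pth Q → Option Q.V
  | Sum.inl v => some v
  | Sum.inr l => l.getLast?.map Q.tgt

/-- Length of a path/thread. -/
def thLen (Q : Quiv) : Pth Q → ℕ
  | Sum.inl _ => 0
  | Sum.inr l => l.length

/-- Permitted threads (trivial and non-trivial ones). -/
def IsPermThread (Q : Quiv) (P : Rels Q) : Pth Q → Prop
  | Sum.inl v => Fintype.card {a : Q.A // Q.src a = v} ≤ 1 ∧
      Fintype.card {a : Q.A // Q.tgt a = v} ≤ 1 ∧
      ∀ b c : Q.A, Q.tgt b = v → Q.src c = v → ¬ P b c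
  | Sum.inr l => l ≠ [] ∧ List.Chain' (permPair Q P) l ∧
      (∀ b : Q.A, ¬ List.Chain' (permPair Q P) (l ++ [b])) ∧
      (∀ b : Q.A, ¬ List.Chain' (permPair Q P) (b :: l))

/-- Forbidden threads (trivial and non-trivial ones). -/
def IsForbThread (Q : Quiv) (P : Rels Q) : Pth Q → Prop
  | Sum.inl v => Fintype.card {a : Q.A // Q.src a = v} ≤ 1 ∧
      Fintype.card {a : Q.A // Q.tgt a = v} ≤ 1 ∧
      ∀ b c : Q.A, Q.tgt b = v → Q.src c = v → P b c
  | Sum.inr l => l ≠ [] ∧ l.Nodup ∧ List.Chain' (forbPair Q P) l ∧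
      (∀ b : Q.A, ¬ ((l ++ [b]).Nodup ∧ List.Chain' (forbPair Q P) (l ++ [b]))) ∧
      (∀ b : Q.A, ¬ ((b :: l).Nodup ∧ List.Chain' (forbPair Q P) (b :: l)))

/-- The axioms for the sign functions `σ, ε : Q₁ → {1,-1}`. -/
structure SgnOk (Q : Quiv) (P : Rels Q) (sg ep : Q.A → ℤ) : Prop where
  sg_pm : ∀ a : Q.A, sg a = 1 ∨ sg a = -1
  ep_pm : ∀ a : Q.A, ep a = 1 ∨ ep a = -1
  sg_opp : ∀ a b : Q.A, a ≠ b → Q.src a = Q.src b → sg a = - sg b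
  ep_opp : ∀ a b : Q.A, a ≠ b → Q.tgt a = Q.tgt b → ep a = - ep b
  comp : ∀ a b : Q.A, Q.tgt a = Q.src b → ¬ P a b → sg b = - ep a

/-- `σ` extended to permitted threads. -/
noncomputable def permSg (Q : Quiv) (sg ep : Q.A → ℤ) : Pth Q → Option ℤ
  | Sum.inl v =>
      if h : ∃ γ : Q.A, Q.src γ = v then some (-(sg h.choose))
      else if h2 : ∃ β : Q.A, Q.tgt β = v then some (ep h2.choose)
      else none
  | Sum.inr l => l.head?.map sg

/-- `ε` extended to permitted threads. -/
noncomputable def permEp (Q : Quiv) (sg ep : Q.A → ℤ) : Pth Q → Option ℤ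
  | Sum.inl v => (permSg Q sg ep (Sum.inl v)).map (fun x => -x)
  | Sum.inr l => l.getLast?.map ep

/-- `σ` extended to forbidden threads. -/
noncomputable def forbSg (Q : Quiv) (sg ep : Q.A → ℤ) : Pth Q → Option ℤ
  | Sum.inl v =>
      if h : ∃ γ : Q.A, Q.src γ = v then some (-(sg h.choose))
      else if h2 : ∃ β : Q.A, Q.tgt β = v then some (-(ep h2.choose))
      else none
  | Sum.inr l => l.head?.map sg

/-- `ε` extended to forbidden threads. -/
noncomputable def forbEp (Q : Quiv) (sg ep : Q.A → ℤ) : Pth Q → Option ℤ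
  | Sum.inl v => forbSg Q sg ep (Sum.inl v)
  | Sum.inr l => l.getLast?.map ep

/-- One step of the algorithm computing `φ_A`: from the permitted thread `H` one
passes backwards through the forbidden thread `Π` (of length `len`) ending at the
end of `H` with `ε(Π) = -ε(H)`, arriving at the permitted thread `H'` starting at
the start of `Π` with `σ(H') = -σ(Π)`. -/
noncomputable def AlgStep (Q : Quiv) (P : Rels Q) (sg ep : Q.A → ℤ)
    (H H' : Pth Q) (len : ℕ) : Prop :=
  IsPermThread Q P H ∧ IsPermThread Q P H' ∧
  ∃ Pi : Pth Q, IsForbThread Q P Pi ∧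
    thEnd Q Pi = thEnd Q H ∧
    forbEp Q sg ep Pi = (permEp Q sg ep H).map (fun x => -x) ∧
    thStart Q H' = thStart Q Pi ∧
    permSg Q sg ep H' = (forbSg Q sg ep Pi).map (fun x => -x) ∧
    len = thLen Q Pi

/-- The permitted thread `H` returns to itself for the first time after exactly `n`
steps of the algorithm, and the total length of the forbidden threads used is `m`. -/
noncomputable def CycleData (Q : Quiv) (P : Rels Q) (sg ep : Q.A → ℤ)
    (H : Pth Q) (n m : ℕ) : Prop :=
  0 < n ∧ IsPermThread Q P H ∧
  ∃ (f : ℕ → Pth Q) (g : ℕ → ℕ),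
    f 0 = H ∧ f n = H ∧
    (∀ i, i < n → AlgStep Q P sg ep (f i) (f (i + 1)) (g i)) ∧
    (∀ i, 0 < i → i < n → f i ≠ H) ∧
    m = ∑ i ∈ Finset.range n, g i

/-- A directed cycle in which each pair of (cyclically) consecutive arrows is a
relation; recorded as a nonempty duplicate-free list of arrows. -/
def IsRelCycle (Q : Quiv) (P : Rels Q) (l : List Q.A) : Prop :=
  l ≠ [] ∧ l.Nodup ∧ List.Chain' (forbPair Q P) l ∧
  ∃ a b : Q.A, l.head? = some a ∧ l.getLast? = some b ∧ Q.tgt b = Q.src a ∧ P b a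

/-- The derived invariant `φ_A : ℕ² → ℕ` of a gentle algebra `A = kQ/⟨P⟩`.
For `n ≥ 1`, `φ_A(n,m)` counts the cycles of the algorithm which use `n` permitted
threads and forbidden threads of total length `m` (each such cycle consists of `n`
permitted threads, whence the division); `φ_A(0,m)` counts the directed cycles of
length `m` in which any two consecutive arrows form a relation (counted up to
rotation: such a cycle of length `m` has exactly `m` rotations). -/
noncomputable def phi (Q : Quiv) (P : Rels Q) (sg ep : Q.A → ℤ) : ℕ × ℕ → ℕ :=
  fun p => match p with
  | (0, m) => Nat.card {l : List Q.A // IsRelCycle Q P l ∧ l.length = m} / m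
  | (n + 1, m) => Nat.card {H : Pth Q // CycleData Q P sg ep H (n + 1) m} / (n + 1)

/-- The Kronecker quiver: two vertices and two parallel arrows. -/
def IsKronecker (Q : Quiv) : Prop :=
  ∃ (v w : Q.V) (a b : Q.A), v ≠ w ∧ a ≠ b ∧ (∀ u : Q.V, u = v ∨ u = w) ∧
    (∀ c : Q.A, c = a ∨ c = b) ∧ (∀ c : Q.A, Q.src c = v ∧ Q.tgt c = w)

end GentlePaper

namespace GentlePaper

/-- Composition of paths: `pcomp Q C D` is the path `C∘D` ("first `D`, then `C`"),
or `none` if the paths are not composable. -/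
def pcomp (Q : Quiv) : Pth Q → Pth Q → Option (Pth Q)
  | Sum.inl v, Sum.inl w => if v = w then some (Sum.inl v) else none
  | Sum.inl v, Sum.inr l => if thEnd Q (Sum.inr l) = some v then some (Sum.inr l) else none
  | Sum.inr l, Sum.inl v => if thStart Q (Sum.inr l) = some v then some (Sum.inr l) else none
  | Sum.inr l, Sum.inr l' => some (Sum.inr (l' ++ l))

/-- The index set `Γ` of the canonical basis of `kQ/⟨P⟩`: residue classes of the
paths of `Q` not lying in `⟨P⟩`. -/
def Gam (Q : Quiv) (P : Rels Q) := {p : Pth Q // pthOk Q P p}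

/-- The trivial path `1_v` as an element of `Γ`. -/
def trivGam (Q : Quiv) (P : Rels Q) (v : Q.V) : Gam Q P := ⟨Sum.inl v, trivial⟩

/-- An arrow `a` as an element of `Γ`. -/
def arrGam (Q : Quiv) (P : Rels Q) (a : Q.A) : Gam Q P :=
  ⟨Sum.inr [a], ⟨List.cons_ne_nil a [], List.isChain_singleton a⟩⟩

/-- The basis vector attached to a path, or `0` if the path lies in `⟨P⟩`. -/
noncomputable def basImg {k : Type} [Field k] {Q : Quiv} {P : Rels Q} {A : Type}
    [Ring A] [Algebra k A] (bas : Module.Basis (Gam Q P) k A) (p : Pth Q) : A :=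
  if h : pthOk Q P p then bas ⟨p, h⟩ else 0

/-- A presentation of the `k`-algebra `A` as the path algebra `kQ/⟨P⟩`: a `k`-basis
indexed by the residue classes of nonzero paths, multiplying as paths do, with the
identity being the sum of the trivial paths.  An algebra admitting such a
presentation is precisely one isomorphic to `kQ/⟨P⟩`. -/
structure PathAlgPresentation (k : Type) [Field k] (Q : Quiv) (P : Rels Q)
    (A : Type) [Ring A] [Algebra k A] where
  bas : Module.Basis (Gam Q P) k A
  mul_bas : ∀ C D : Gam Q P,
    bas C * bas D = (pcomp Q C.1 D.1).elim 0 (basImg bas)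
  one_bas : (1 : A) = ∑ v : Q.V, bas (trivGam Q P v)

namespace PathAlgPresentation

variable {k : Type} [Field k] {Q : Quiv} {P : Rels Q} {A : Type} [Ring A] [Algebra k A]

/-- The idempotent `1_v` of the presented algebra. -/
noncomputable def e (pp : PathAlgPresentation k Q P A) (v : Q.V) : A :=
  pp.bas (trivGam Q P v)

/-- The coefficient `f_C(D)` of the basis element `C` in the expansion of `f(D)`. -/
noncomputable def coeff (pp : PathAlgPresentation k Q P A)
    (f : A ≃ₐ[k] A) (C D : Gam Q P) : k :=
  pp.bas.repr (f (pp.bas D)) C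

/-- Membership in `Aut^l(A)`: algebra automorphisms fixing all the `1_v`. -/
def MemAutL (pp : PathAlgPresentation k Q P A) (f : A ≃ₐ[k] A) : Prop :=
  ∀ v : Q.V, f (pp.e v) = pp.e v

/-- Membership in `Aut₊^l(A) = {f ∈ Aut^l(A) | f_α(α) ≠ 0 for all arrows α}`. -/
noncomputable def MemAutStar (pp : PathAlgPresentation k Q P A) (f : A ≃ₐ[k] A) : Prop :=
  pp.MemAutL f ∧ ∀ a : Q.A, pp.coeff f (arrGam Q P a) (arrGam Q P a) ≠ 0

/-- Membership in `S(Q₁)`: automorphisms in `Aut₊^l(A)` rescaling every arrow. -/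
noncomputable def MemSQ1 (pp : PathAlgPresentation k Q P A) (f : A ≃ₐ[k] A) : Prop :=
  pp.MemAutStar f ∧ ∀ a : Q.A, ∃ c : kˣ,
    f (pp.bas (arrGam Q P a)) = (c : k) • pp.bas (arrGam Q P a)

/-- Membership in `N(A) = {f ∈ Aut₊^l(A) | f_α(α) = 1 for all arrows α}`. -/
noncomputable def MemNA (pp : PathAlgPresentation k Q P A) (f : A ≃ₐ[k] A) : Prop :=
  pp.MemAutStar f ∧ ∀ a : Q.A, pp.coeff f (arrGam Q P a) (arrGam Q P a) = 1

/-- Membership of an element in the subalgebra `⊕_{v ∈ Q₀} 1_v A 1_v`. -/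
noncomputable def IsDiag (pp : PathAlgPresentation k Q P A) (x : A) : Prop :=
  (∑ v : Q.V, pp.e v * x * pp.e v) = x

/-- Membership in `Inn^l(A)`: inner automorphisms `ι_x` with `x` an invertible
element of `⊕_v 1_v A 1_v`. -/
noncomputable def MemInnL (pp : PathAlgPresentation k Q P A) (f : A ≃ₐ[k] A) : Prop :=
  ∃ x : Aˣ, pp.IsDiag (x : A) ∧ ∀ a : A, f a = (↑x⁻¹ : A) * a * (x : A)

/-- Membership in `Inn_S^l(A)`: inner automorphisms `ι_s`, `s = Σ_v c_v 1_v`, `c_v ∈ k*`. -/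
noncomputable def MemInnS (pp : PathAlgPresentation k Q P A) (f : A ≃ₐ[k] A) : Prop :=
  ∃ (c : Q.V → kˣ) (x : Aˣ), ((x : A) = ∑ v : Q.V, (c v : k) • pp.e v) ∧
    ∀ a : A, f a = (↑x⁻¹ : A) * a * (x : A)

/-- Membership in `Inn_N^l(A)`: inner automorphisms `ι_u`, `u = Σ_v (1_v + n_v)`,
with `n_v ∈ 1_v A 1_v` nilpotent. -/
noncomputable def MemInnN (pp : PathAlgPresentation k Q P A) (f : A ≃ₐ[k] A) : Prop :=
  ∃ (x : Aˣ) (n : Q.V → A), (∀ v : Q.V, IsNilpotent (n v)) ∧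
    (∀ v : Q.V, pp.e v * n v * pp.e v = n v) ∧
    ((x : A) = ∑ v : Q.V, (pp.e v + n v)) ∧
    ∀ a : A, f a = (↑x⁻¹ : A) * a * (x : A)

end PathAlgPresentation

end GentlePaper

/-!
Paths of positive length are nilpotent and the coefficient of a trivial path is a ring
homomorphism `A → k`, so automorphisms send arrows to elements without trivial components; hence
arrow-to-arrow coefficients compose like matrices, and for `f ∈ Aut^l(A)` the coefficient
`f_ρ(α)` vanishes unless `ρ` is parallel to `α`. For distinct parallel arrows, an adjacent arrow
forms a relation with exactly one of them, and applying `f` to that relation kills one fixed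
off-diagonal coefficient for all `f ∈ Aut_*^l(A)`; only in the Kronecker quiver do parallel arrows
have no neighbours. This triangularity makes `f ↦ (f_α(α))_α` a homomorphism
`Aut_*^l(A) → (k^*)^{Q₁}` with kernel `N(A)`, split by the rescalings `α ↦ c_α α` that form `S(Q₁)`.
-/

lemma Fintype.eq_or_eq_of_card_le_two {X : Type*} [Fintype X] (h : Fintype.card X ≤ 2) {a b : X}
    (hab : a ≠ b) (c : X) : c = a ∨ c = b := by
  by_contra! hc
  have := Fintype.two_lt_card_iff.mpr ⟨a, b, c, hab, hc.1.symm, hc.2.symm⟩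
  omega

lemma Module.Basis.map_mul_of_forall {ι R A B : Type*} [CommSemiring R] [Semiring A] [Semiring B]
    [Algebra R A] [Algebra R B] (b : Module.Basis ι R A) (f : A →ₗ[R] B)
    (h : ∀ i j, f (b i * b j) = f (b i) * f (b j)) (x y : A) : f (x * y) = f x * f y := by
  revert x y
  rw [LinearMap.map_mul_iff]
  exact b.ext fun i => b.ext fun j => h i j

namespace GentlePaper

open PathAlgPresentation

namespace IsGentle

variable {Q : Quiv} {P : Rels Q}

lemma exists_length_lt (hg : IsGentle Q P) :
    ∃ N, ∀ l : List Q.A, pthOk Q P (Sum.inr l) → l.length < N := by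
  obtain ⟨N, hN⟩ := hg.bounded
  refine ⟨N, fun l hl => ?_⟩
  by_contra! hle
  have hpre := hl.2.take N
  obtain ⟨l₁, a, b, l₂, heq, hab⟩ := hN (l.take N) (hpre.imp fun _ _ h => h.1) (by simp [hle])
  rw [heq] at hpre
  exact (List.isChain_cons_cons.mp (List.isChain_append.mp hpre).2.1).1.2 hab

lemma finite_gam (hg : IsGentle Q P) : Finite (Gam Q P) := by
  obtain ⟨N, hN⟩ := hg.exists_length_lt
  refine Set.Finite.to_subtype (((Set.finite_range Sum.inl).union
    ((List.finite_length_lt Q.A N).image Sum.inr)).subset ?_)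
  rintro (v | l) hp
  · exact Or.inl ⟨v, rfl⟩
  · exact Or.inr ⟨l, hN l hp, rfl⟩

lemma rel_of_loop (hg : IsGentle Q P) {γ : Q.A} (hγ : Q.tgt γ = Q.src γ) : P γ γ := by
  obtain ⟨N, hN⟩ := hg.bounded
  obtain ⟨l₁, a, b, l₂, heq, hab⟩ :=
    hN (List.replicate N γ) (List.isChain_replicate_of_rel N hγ) List.length_replicate
  have hmem : ∀ x ∈ l₁ ++ a :: b :: l₂, x = γ := fun x hx =>
    List.eq_of_mem_replicate (heq ▸ hx)
  rwa [hmem a (by simp), hmem b (by simp)] at hab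

lemma eq_or_eq_of_src_eq (hg : IsGentle Q P) {α β c : Q.A} (hne : α ≠ β)
    (hβ : Q.src β = Q.src α) (hc : Q.src c = Q.src α) : c = α ∨ c = β := by
  simpa [Subtype.ext_iff] using Fintype.eq_or_eq_of_card_le_two (hg.src_le_two (Q.src α))
    (a := ⟨α, rfl⟩) (b := ⟨β, hβ⟩) (by simpa [Subtype.ext_iff] using hne) ⟨c, hc⟩

lemma eq_or_eq_of_tgt_eq (hg : IsGentle Q P) {α β c : Q.A} (hne : α ≠ β)
    (hβ : Q.tgt β = Q.tgt α) (hc : Q.tgt c = Q.tgt α) : c = α ∨ c = β := by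
  simpa [Subtype.ext_iff] using Fintype.eq_or_eq_of_card_le_two (hg.tgt_le_two (Q.tgt α))
    (a := ⟨α, rfl⟩) (b := ⟨β, hβ⟩) (by simpa [Subtype.ext_iff] using hne) ⟨c, hc⟩

lemma isKronecker_of_parallel (hg : IsGentle Q P) (hc : Connected Q) {α β : Q.A}
    (hne : α ≠ β) (hs : Q.src β = Q.src α) (ht : Q.tgt β = Q.tgt α)
    (hloop : Q.tgt α ≠ Q.src α) (hout : ∀ γ : Q.A, Q.src γ ≠ Q.tgt α)
    (hin : ∀ δ : Q.A, Q.tgt δ ≠ Q.src α) : IsKronecker Q := by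
  have hpair : ∀ a x, (Q.src a = x ∨ Q.tgt a = x) → (x = Q.src α ∨ x = Q.tgt α) →
      a = α ∨ a = β := by
    rintro a x (h | h) (rfl | rfl)
    exacts [hg.eq_or_eq_of_src_eq hne hs h, absurd h (hout a), absurd h (hin a),
      hg.eq_or_eq_of_tgt_eq hne ht h]
  have hends : ∀ a, a = α ∨ a = β → Q.src a = Q.src α ∧ Q.tgt a = Q.tgt α := by
    rintro a (rfl | rfl)
    exacts [⟨rfl, rfl⟩, ⟨hs, ht⟩]
  have hvert : ∀ u, u = Q.src α ∨ u = Q.tgt α := by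
    intro u
    induction hc.2 (Q.src α) u with
    | refl => exact Or.inl rfl
    | tail _ hstep ih =>
      obtain ⟨a, ⟨rfl, rfl⟩ | ⟨rfl, rfl⟩⟩ := hstep
      · exact Or.inr (hends a (hpair a _ (Or.inl rfl) ih)).2
      · exact Or.inl (hends a (hpair a _ (Or.inr rfl) ih)).1
  have harr : ∀ c, c = α ∨ c = β := fun c => hpair c _ (Or.inl rfl) (hvert _)
  exact ⟨Q.src α, Q.tgt α, α, β, hloop.symm, hne, hvert, harr, fun c => hends c (harr c)⟩

end IsGentle

section Paths

variable {Q : Quiv} {P : Rels Q}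

lemma thLen_of_pcomp_eq_some {p q r : Pth Q} (h : pcomp Q p q = some r) :
    thLen Q r = thLen Q p + thLen Q q := by
  rcases p with v | l <;> rcases q with w | m <;> simp only [pcomp] at h <;>
    (try split_ifs at h) <;> cases h <;> simp [thLen, Nat.add_comm]

lemma pcomp_inl_left (v : Q.V) (p : Pth Q) :
    pcomp Q (Sum.inl v) p = if thEnd Q p = some v then some p else none := by
  rcases p with w | l
  · by_cases h : v = w <;> simp [pcomp, thEnd, h, eq_comm]
  · rfl

lemma pcomp_inl_right (v : Q.V) (p : Pth Q) :
    pcomp Q p (Sum.inl v) = if thStart Q p = some v then some p else none := by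
  rcases p with w | l
  · by_cases h : w = v <;> simp [pcomp, thStart, h]
  · rfl

lemma pthOk_pair {b c : Q.A} (hbc : Q.tgt b = Q.src c) (hn : ¬ P b c) :
    pthOk Q P (Sum.inr [b, c]) :=
  ⟨List.cons_ne_nil _ _, List.isChain_pair.mpr ⟨hbc, hn⟩⟩

lemma arrGam_injective : Function.Injective (arrGam Q P) := by
  intro a b h
  simpa using Sum.inr_injective (congrArg Subtype.val h)

lemma trivGam_injective : Function.Injective (trivGam Q P) := fun _ _ h =>
  Sum.inl_injective (congrArg Subtype.val h)

namespace Gam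

lemma exists_eq_trivGam {C : Gam Q P} (h : thLen Q C.1 = 0) : ∃ u, C = trivGam Q P u := by
  obtain ⟨u | l, hp⟩ := C
  · exact ⟨u, rfl⟩
  · exact absurd (List.length_eq_zero_iff.mp h) hp.1

lemma exists_eq_arrGam {C : Gam Q P} (h : thLen Q C.1 = 1) : ∃ a, C = arrGam Q P a := by
  obtain ⟨u | l, hp⟩ := C
  · simp [thLen] at h
  · obtain ⟨a, rfl⟩ := List.length_eq_one_iff.mp h
    exact ⟨a, rfl⟩

lemma exists_thStart_thEnd (C : Gam Q P) :
    ∃ v w, thStart Q C.1 = some v ∧ thEnd Q C.1 = some w := by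
  obtain ⟨u | l, hp⟩ := C
  · exact ⟨u, u, rfl, rfl⟩
  · exact ⟨Q.src (l.head hp.1), Q.tgt (l.getLast hp.1),
      by simp [thStart, List.head?_eq_some_head hp.1],
      by simp [thEnd, List.getLast?_eq_some_getLast hp.1]⟩

lemma eq_trivGam_of_pcomp {D E : Gam Q P} {u : Q.V}
    (h : pcomp Q D.1 E.1 = some (trivGam Q P u).1) : D = trivGam Q P u ∧ E = trivGam Q P u := by
  have hlen : thLen Q D.1 + thLen Q E.1 = 0 := (thLen_of_pcomp_eq_some h).symm
  obtain ⟨v, rfl⟩ := exists_eq_trivGam (C := D) (by omega)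
  obtain ⟨w, rfl⟩ := exists_eq_trivGam (C := E) (by omega)
  by_cases hvw : v = w
  · subst hvw
    simp only [pcomp, trivGam, if_true] at h
    obtain rfl := Sum.inl_injective (Option.some_injective _ h)
    exact ⟨rfl, rfl⟩
  · simp [pcomp, trivGam, hvw] at h

lemma eq_arrGam_of_pcomp {D E : Gam Q P} {b c : Q.A} (hD : thLen Q D.1 ≠ 0)
    (hE : thLen Q E.1 ≠ 0) (h : pcomp Q D.1 E.1 = some (Sum.inr [b, c])) :
    D = arrGam Q P c ∧ E = arrGam Q P b := by
  have hlen : thLen Q D.1 + thLen Q E.1 = 2 := (thLen_of_pcomp_eq_some h).symm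
  obtain ⟨d, rfl⟩ := exists_eq_arrGam (C := D) (by omega)
  obtain ⟨e, rfl⟩ := exists_eq_arrGam (C := E) (by omega)
  obtain ⟨rfl, rfl⟩ : e = b ∧ d = c := by
    simpa using Sum.inr_injective (Option.some_injective _ h)
  exact ⟨rfl, rfl⟩

end Gam

end Paths

section PathWeight

variable {M : Type*} [CommMonoid M] {Q : Quiv} {P : Rels Q}

def pathWeight (c : Q.A → M) : Pth Q → M
  | Sum.inl _ => 1
  | Sum.inr l => (l.map c).prod

lemma pathWeight_of_pcomp_eq_some (c : Q.A → M) {p q r : Pth Q} (h : pcomp Q p q = some r) :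
    pathWeight c r = pathWeight c p * pathWeight c q := by
  rcases p with v | l <;> rcases q with w | m <;> simp only [pcomp] at h <;>
    (try split_ifs at h) <;> cases h <;> simp [pathWeight, mul_comm]

lemma pathWeight_mul (c d : Q.A → M) (p : Pth Q) :
    pathWeight (c * d) p = pathWeight c p * pathWeight d p := by
  rcases p with v | l
  · simp [pathWeight]
  · exact List.prod_map_mul

lemma pathWeight_one (p : Pth Q) : pathWeight (1 : Q.A → M) p = 1 := by
  rcases p with v | l
  · rfl
  · simp [pathWeight, Pi.one_def]

lemma pathWeight_trivGam (c : Q.A → M) (v : Q.V) : pathWeight c (trivGam Q P v).1 = 1 := rfl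

lemma pathWeight_arrGam (c : Q.A → M) (a : Q.A) : pathWeight c (arrGam Q P a).1 = c a := by
  simp [pathWeight, arrGam]

end PathWeight

namespace PathAlgPresentation

variable {k : Type} [Field k] {Q : Quiv} {P : Rels Q} {A : Type} [Ring A] [Algebra k A]
  (pp : PathAlgPresentation k Q P A)

section Basis

lemma basImg_val (C : Gam Q P) : basImg pp.bas C.1 = pp.bas C :=
  dif_pos C.2

lemma basImg_of_not_pthOk {p : Pth Q} (hp : ¬ pthOk Q P p) : basImg pp.bas p = 0 :=
  dif_neg hp

lemma repr_basImg (p : Pth Q) (C : Gam Q P) :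
    pp.bas.repr (basImg pp.bas p) C = if p = C.1 then 1 else 0 := by
  by_cases hp : pthOk Q P p
  · obtain ⟨D, rfl⟩ : ∃ D : Gam Q P, D.1 = p := ⟨⟨p, hp⟩, rfl⟩
    rw [basImg_val, Module.Basis.repr_self, Finsupp.single_apply]
    exact if_congr Subtype.ext_iff rfl rfl
  · rw [basImg_of_not_pthOk pp hp, map_zero, Finsupp.zero_apply, if_neg]
    rintro rfl
    exact hp C.2

lemma repr_bas_mul_bas (D E C : Gam Q P) :
    pp.bas.repr (pp.bas D * pp.bas E) C = if pcomp Q D.1 E.1 = some C.1 then 1 else 0 := by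
  rw [pp.mul_bas]
  rcases pcomp Q D.1 E.1 with _ | p
  · simp
  · simpa using repr_basImg pp p C

lemma repr_mul [Fintype (Gam Q P)] (x y : A) (C : Gam Q P) :
    pp.bas.repr (x * y) C = ∑ D, ∑ E, pp.bas.repr x D * pp.bas.repr y E *
      if pcomp Q D.1 E.1 = some C.1 then 1 else 0 := by
  conv_lhs => rw [← pp.bas.sum_repr x, ← pp.bas.sum_repr y]
  simp only [Finset.sum_mul_sum, smul_mul_smul_comm, map_sum, map_smul, Finsupp.coe_finsetSum,
    Finset.sum_apply, Finsupp.smul_apply, repr_bas_mul_bas, smul_eq_mul]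

lemma e_mul_bas (w : Q.V) (C : Gam Q P) :
    pp.e w * pp.bas C = if thEnd Q C.1 = some w then pp.bas C else 0 := by
  rw [e, pp.mul_bas, trivGam, pcomp_inl_left]
  split_ifs <;> simp [basImg_val]

lemma bas_mul_e (v : Q.V) (C : Gam Q P) :
    pp.bas C * pp.e v = if thStart Q C.1 = some v then pp.bas C else 0 := by
  rw [e, pp.mul_bas, trivGam, pcomp_inl_right]
  split_ifs <;> simp [basImg_val]

lemma e_mul_bas_mul_e (v w : Q.V) (C : Gam Q P) :
    pp.e w * pp.bas C * pp.e v =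
      if thStart Q C.1 = some v ∧ thEnd Q C.1 = some w then pp.bas C else 0 := by
  rw [mul_assoc, bas_mul_e]
  by_cases h : thStart Q C.1 = some v
  · simp [h, e_mul_bas]
  · simp [h]

lemma repr_e_mul_mul_e [Fintype (Gam Q P)] (v w : Q.V) (x : A) (C : Gam Q P) :
    pp.bas.repr (pp.e w * x * pp.e v) C =
      if thStart Q C.1 = some v ∧ thEnd Q C.1 = some w then pp.bas.repr x C else 0 := by
  conv_lhs => rw [← pp.bas.sum_repr x]
  simp only [Finset.mul_sum, Finset.sum_mul, mul_smul_comm, smul_mul_assoc, e_mul_bas_mul_e,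
    map_sum, Finsupp.coe_finsetSum, Finset.sum_apply]
  rw [Finset.sum_eq_single C (fun D _ hD => by split_ifs <;> simp [hD])
    (by simp)]
  split_ifs <;> simp

lemma repr_map_bas_eq_zero_of_memAutL [Fintype (Gam Q P)] {f : A ≃ₐ[k] A} (hf : pp.MemAutL f)
    {C D : Gam Q P} (h : ¬ (thStart Q D.1 = thStart Q C.1 ∧ thEnd Q D.1 = thEnd Q C.1)) :
    pp.bas.repr (f (pp.bas C)) D = 0 := by
  obtain ⟨v, w, hv, hw⟩ := C.exists_thStart_thEnd
  have hC : pp.e w * pp.bas C * pp.e v = pp.bas C := by rw [e_mul_bas_mul_e, if_pos ⟨hv, hw⟩]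
  rw [← hC, map_mul f, map_mul f, hf v, hf w, repr_e_mul_mul_e, if_neg]
  rintro ⟨h1, h2⟩
  exact h ⟨h1.trans hv.symm, h2.trans hw.symm⟩

lemma coeff_arr_eq_zero_of_not_parallel [Fintype (Gam Q P)] {f : A ≃ₐ[k] A}
    (hf : pp.MemAutL f) {ρ α : Q.A} (h : ¬ (Q.src ρ = Q.src α ∧ Q.tgt ρ = Q.tgt α)) :
    pp.coeff f (arrGam Q P ρ) (arrGam Q P α) = 0 :=
  pp.repr_map_bas_eq_zero_of_memAutL hf fun ⟨h1, h2⟩ =>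
    h ⟨Option.some_inj.mp h1, Option.some_inj.mp h2⟩

lemma coeff_one_self (C : Gam Q P) : pp.coeff 1 C C = 1 := by
  simp [coeff]

lemma memAutL_inv {f : A ≃ₐ[k] A} (hf : pp.MemAutL f) : pp.MemAutL f⁻¹ := fun v => by
  rw [← hf v, ← AlgEquiv.mul_apply, inv_mul_cancel, AlgEquiv.one_apply, hf v]

lemma bas_cons {a : Q.A} {t : List Q.A} (hp : pthOk Q P (Sum.inr (a :: t))) (ht : t ≠ []) :
    pp.bas ⟨Sum.inr (a :: t), hp⟩ =
      pp.bas ⟨Sum.inr t, ht, hp.2.tail⟩ * pp.bas (arrGam Q P a) :=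
  ((pp.mul_bas ⟨Sum.inr t, ht, hp.2.tail⟩ (arrGam Q P a)).trans
    (basImg_val pp ⟨_, hp⟩)).symm

lemma algEquiv_ext {f g : A ≃ₐ[k] A} (h : ∀ C, f (pp.bas C) = g (pp.bas C)) : f = g :=
  AlgEquiv.toLinearEquiv_injective (pp.bas.ext' h)

lemma ext_of_memAutL {f₁ f₂ : A ≃ₐ[k] A} (hf₁ : pp.MemAutL f₁) (hf₂ : pp.MemAutL f₂)
    (h : ∀ a, f₁ (pp.bas (arrGam Q P a)) = f₂ (pp.bas (arrGam Q P a))) : f₁ = f₂ := by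
  refine pp.algEquiv_ext ?_
  rintro ⟨v | l, hp⟩
  · exact (hf₁ v).trans (hf₂ v).symm
  induction l with
  | nil => exact absurd rfl hp.1
  | cons a t ih =>
    by_cases ht : t = []
    · subst ht
      exact h a
    · rw [pp.bas_cons hp ht, map_mul f₁, map_mul f₂, h a]
      exact congrArg (· * _) (ih _)

end Basis

section ArrowIdeal

lemma basImg_mul_bas {l m : List Q.A} (hm : m ≠ []) (hl : pthOk Q P (Sum.inr l)) :
    basImg pp.bas (Sum.inr m) * pp.bas ⟨Sum.inr l, hl⟩ = basImg pp.bas (Sum.inr (l ++ m)) := by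
  by_cases hok : pthOk Q P (Sum.inr m)
  · exact (congrArg (· * pp.bas ⟨Sum.inr l, hl⟩) (basImg_val pp ⟨_, hok⟩)).trans
      (pp.mul_bas ⟨_, hok⟩ ⟨_, hl⟩)
  · have : ¬ pthOk Q P (Sum.inr (l ++ m)) := fun ⟨_, hch⟩ =>
      hok ⟨hm, (List.isChain_append.mp hch).2.1⟩
    rw [basImg_of_not_pthOk pp hok, basImg_of_not_pthOk pp this, zero_mul]

lemma bas_pow_succ {l : List Q.A} (hl : pthOk Q P (Sum.inr l)) (n : ℕ) :
    pp.bas ⟨Sum.inr l, hl⟩ ^ (n + 1) =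
      basImg pp.bas (Sum.inr (List.replicate (n + 1) l).flatten) := by
  induction n with
  | zero => simpa using (basImg_val pp ⟨_, hl⟩).symm
  | succ n ih =>
    rw [pow_succ, ih, basImg_mul_bas pp (by simpa using hl.1) hl]
    rfl

lemma isNilpotent_bas (hg : IsGentle Q P) {C : Gam Q P} (hC : thLen Q C.1 ≠ 0) :
    IsNilpotent (pp.bas C) := by
  obtain ⟨N, hN⟩ := hg.exists_length_lt
  obtain ⟨_ | l, hl⟩ := C
  · exact absurd rfl hC
  refine ⟨N + 1, ?_⟩
  rw [bas_pow_succ]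
  refine basImg_of_not_pthOk pp fun hok => ?_
  have hlt := hN _ hok
  simp only [List.length_flatten, List.map_replicate, List.sum_replicate, smul_eq_mul] at hlt
  have hpos : 1 ≤ l.length := List.length_pos_iff.mpr hl.1
  nlinarith

noncomputable def trivCoeff [Fintype (Gam Q P)] (u : Q.V) : A →+* k where
  toFun x := pp.bas.repr x (trivGam Q P u)
  map_one' := by
    simp [pp.one_bas, Finsupp.single_apply, trivGam_injective.eq_iff]
  map_mul' x y := by
    rw [repr_mul, Finset.sum_eq_single (trivGam Q P u), Finset.sum_eq_single (trivGam Q P u)]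
    · simp [pcomp, trivGam]
    · intro E _ hE
      rw [if_neg fun h => hE (Gam.eq_trivGam_of_pcomp h).2, mul_zero]
    · simp
    · intro D _ hD
      refine Finset.sum_eq_zero fun E _ => ?_
      rw [if_neg fun h => hD (Gam.eq_trivGam_of_pcomp h).1, mul_zero]
    · simp
  map_zero' := by simp
  map_add' := by simp

def MemArrowIdeal (x : A) : Prop := ∀ u : Q.V, pp.bas.repr x (trivGam Q P u) = 0

lemma memArrowIdeal_map_bas [Fintype (Gam Q P)] (hg : IsGentle Q P) (f : A ≃ₐ[k] A)
    {C : Gam Q P} (hC : thLen Q C.1 ≠ 0) : pp.MemArrowIdeal (f (pp.bas C)) := fun u =>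
  (((pp.isNilpotent_bas hg hC).map f).map (pp.trivCoeff u)).eq_zero

lemma repr_mul_eq_zero_of_thLen_le_one [Fintype (Gam Q P)] {x y : A}
    (hx : pp.MemArrowIdeal x) (hy : pp.MemArrowIdeal y) {C : Gam Q P} (hC : thLen Q C.1 ≤ 1) :
    pp.bas.repr (x * y) C = 0 := by
  rw [repr_mul]
  refine Finset.sum_eq_zero fun D _ => Finset.sum_eq_zero fun E _ => ?_
  split_ifs with h
  · have hlen := thLen_of_pcomp_eq_some h
    rcases Nat.eq_zero_or_pos (thLen Q D.1) with hD | hD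
    · obtain ⟨u, rfl⟩ := Gam.exists_eq_trivGam hD
      rw [hx u, zero_mul, zero_mul]
    · obtain ⟨u, rfl⟩ := Gam.exists_eq_trivGam (C := E) (by omega)
      rw [hy u, mul_zero, zero_mul]
  · rw [mul_zero]

lemma repr_mul_pair [Fintype (Gam Q P)] {x y : A} (hx : pp.MemArrowIdeal x)
    (hy : pp.MemArrowIdeal y) {b c : Q.A} (hbc : pthOk Q P (Sum.inr [b, c])) :
    pp.bas.repr (x * y) ⟨Sum.inr [b, c], hbc⟩ =
      pp.bas.repr x (arrGam Q P c) * pp.bas.repr y (arrGam Q P b) := by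
  set C : Gam Q P := ⟨Sum.inr [b, c], hbc⟩
  have hterm : ∀ D E : Gam Q P, pp.bas.repr x D * pp.bas.repr y E *
      (if pcomp Q D.1 E.1 = some C.1 then 1 else 0) =
        if D = arrGam Q P c ∧ E = arrGam Q P b then pp.bas.repr x D * pp.bas.repr y E else 0 := by
    intro D E
    by_cases hD : thLen Q D.1 = 0
    · obtain ⟨u, rfl⟩ := Gam.exists_eq_trivGam hD
      simp [hx u]
    by_cases hE : thLen Q E.1 = 0
    · obtain ⟨u, rfl⟩ := Gam.exists_eq_trivGam hE
      simp [hy u]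
    by_cases h : pcomp Q D.1 E.1 = some C.1
    · rw [if_pos h, if_pos (Gam.eq_arrGam_of_pcomp hD hE h), mul_one]
    · rw [if_neg h, mul_zero, if_neg]
      rintro ⟨rfl, rfl⟩
      exact h rfl
  rw [repr_mul]
  simp [hterm, ite_and]

lemma repr_map_bas_eq_zero_of_two_le [Fintype (Gam Q P)] (hg : IsGentle Q P) (f : A ≃ₐ[k] A)
    {C D : Gam Q P} (hC : 2 ≤ thLen Q C.1) (hD : thLen Q D.1 ≤ 1) :
    pp.bas.repr (f (pp.bas C)) D = 0 := by
  obtain ⟨_ | l, hp⟩ := C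
  · simp [thLen] at hC
  obtain ⟨a, t, rfl⟩ := List.exists_cons_of_ne_nil hp.1
  have ht : t ≠ [] := by
    rintro rfl
    simp [thLen] at hC
  rw [pp.bas_cons hp ht, map_mul f]
  exact pp.repr_mul_eq_zero_of_thLen_le_one (pp.memArrowIdeal_map_bas hg f (by simpa [thLen]))
    (pp.memArrowIdeal_map_bas hg f (by simp [arrGam, thLen])) hD

/-- Trivial-path components of `f₂ α` vanish, and `f₁` sends paths of length `≥ 2` to elements
without components of length `≤ 1`. -/
lemma coeff_mul_arr [Fintype (Gam Q P)] (hg : IsGentle Q P) (f₁ f₂ : A ≃ₐ[k] A) (α δ : Q.A) :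
    pp.coeff (f₁ * f₂) (arrGam Q P δ) (arrGam Q P α) =
      ∑ ρ : Q.A, pp.coeff f₂ (arrGam Q P ρ) (arrGam Q P α) *
        pp.coeff f₁ (arrGam Q P δ) (arrGam Q P ρ) := by
  simp only [coeff]
  have hδ : thLen Q (arrGam Q P δ).1 ≤ 1 := le_rfl
  have hzero : ∀ D ∈ Finset.univ, D ∉ Finset.univ.image (arrGam Q P) →
      pp.bas.repr (f₂ (pp.bas (arrGam Q P α))) D * pp.bas.repr (f₁ (pp.bas D)) (arrGam Q P δ) =
        0 := by
    intro D _ hD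
    rcases lt_trichotomy (thLen Q D.1) 1 with h0 | h1 | h2
    · obtain ⟨u, rfl⟩ := Gam.exists_eq_trivGam (C := D) (by omega)
      rw [pp.memArrowIdeal_map_bas hg f₂ (by simp [arrGam, thLen]) u, zero_mul]
    · obtain ⟨a, rfl⟩ := Gam.exists_eq_arrGam h1
      exact absurd (Finset.mem_image_of_mem _ (Finset.mem_univ a)) hD
    · rw [pp.repr_map_bas_eq_zero_of_two_le hg f₁ h2 hδ, mul_zero]
  rw [AlgEquiv.mul_apply]
  conv_lhs => rw [← pp.bas.sum_repr (f₂ (pp.bas (arrGam Q P α)))]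
  simp only [map_sum, map_smul, Finsupp.coe_finsetSum, Finset.sum_apply, Finsupp.smul_apply,
    smul_eq_mul]
  rw [← Finset.sum_subset (Finset.subset_univ _) hzero,
    Finset.sum_image fun a _ b _ h => arrGam_injective h]

end ArrowIdeal

section Triangular

variable [Fintype (Gam Q P)]

lemma coeff_mul_coeff_eq_zero_of_rel (hg : IsGentle Q P) (f : A ≃ₐ[k] A) {a b c d : Q.A}
    (hac : P a c) (hbd : pthOk Q P (Sum.inr [b, d])) :
    pp.coeff f (arrGam Q P d) (arrGam Q P c) * pp.coeff f (arrGam Q P b) (arrGam Q P a) = 0 := by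
  have hca : pp.bas (arrGam Q P c) * pp.bas (arrGam Q P a) = 0 :=
    (pp.mul_bas _ _).trans (basImg_of_not_pthOk pp fun h => (List.isChain_pair.mp h.2).2 hac)
  have := pp.repr_mul_pair (pp.memArrowIdeal_map_bas hg f (C := arrGam Q P c) one_ne_zero)
    (pp.memArrowIdeal_map_bas hg f (C := arrGam Q P a) one_ne_zero) hbd
  rw [← map_mul f, hca, map_zero, map_zero] at this
  exact this.symm.trans Finsupp.zero_apply

lemma coeff_eq_zero_of_rel_of_not_rel_right (hg : IsGentle Q P) {f : A ≃ₐ[k] A}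
    (hf : pp.MemAutStar f) {a b c : Q.A} (hac : P a c) (hbc : Q.tgt b = Q.src c)
    (hnbc : ¬ P b c) : pp.coeff f (arrGam Q P b) (arrGam Q P a) = 0 :=
  (mul_eq_zero.mp (pp.coeff_mul_coeff_eq_zero_of_rel hg f hac (pthOk_pair hbc hnbc))).resolve_left
    (hf.2 c)

lemma coeff_eq_zero_of_rel_of_not_rel_left (hg : IsGentle Q P) {f : A ≃ₐ[k] A}
    (hf : pp.MemAutStar f) {a c d : Q.A} (hac : P a c) (had : Q.tgt a = Q.src d)
    (hnad : ¬ P a d) : pp.coeff f (arrGam Q P d) (arrGam Q P c) = 0 :=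
  (mul_eq_zero.mp (pp.coeff_mul_coeff_eq_zero_of_rel hg f hac (pthOk_pair had hnad))).resolve_right
    (hf.2 a)

lemma coeff_triangular (hg : IsGentle Q P) (hc : Connected Q) (hnk : ¬ IsKronecker Q)
    {α ρ : Q.A} (hne : α ≠ ρ) :
    (∀ f, pp.MemAutStar f → pp.coeff f (arrGam Q P ρ) (arrGam Q P α) = 0) ∨
      (∀ f, pp.MemAutStar f → pp.coeff f (arrGam Q P α) (arrGam Q P ρ) = 0) := by
  by_cases hpar : Q.src ρ = Q.src α ∧ Q.tgt ρ = Q.tgt α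
  swap
  · exact Or.inl fun f hf => pp.coeff_arr_eq_zero_of_not_parallel hf.1 hpar
  obtain ⟨hs, ht⟩ := hpar
  by_cases hloop : Q.tgt α = Q.src α
  · have hαα := hg.rel_of_loop hloop
    exact Or.inl fun f hf => pp.coeff_eq_zero_of_rel_of_not_rel_right hg hf hαα (ht.trans hloop)
      fun h => hne (hg.rel_pred_unique α α ρ hαα h)
  by_cases hout : ∃ γ, Q.src γ = Q.tgt α
  · obtain ⟨γ, hγ⟩ := hout
    by_cases hαγ : P α γ
    · exact Or.inl fun f hf => pp.coeff_eq_zero_of_rel_of_not_rel_right hg hf hαγ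
        (ht.trans hγ.symm) fun h => hne (hg.rel_pred_unique γ α ρ hαγ h)
    · have hργ : P ρ γ := by_contra fun h =>
        hne (hg.nonrel_pred_unique γ α ρ hγ.symm (ht.trans hγ.symm) hαγ h)
      exact Or.inr fun f hf => pp.coeff_eq_zero_of_rel_of_not_rel_right hg hf hργ hγ.symm hαγ
  by_cases hin : ∃ δ, Q.tgt δ = Q.src α
  · obtain ⟨δ, hδ⟩ := hin
    by_cases hδα : P δ α
    · exact Or.inl fun f hf => pp.coeff_eq_zero_of_rel_of_not_rel_left hg hf hδα
        (hδ.trans hs.symm) fun h => hne (hg.rel_succ_unique δ α ρ hδα h)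
    · have hδρ : P δ ρ := by_contra fun h =>
        hne (hg.nonrel_succ_unique δ α ρ hδ.symm (hs.trans hδ.symm) hδα h)
      exact Or.inr fun f hf => pp.coeff_eq_zero_of_rel_of_not_rel_left hg hf hδρ hδ hδα
  push Not at hout hin
  exact absurd (hg.isKronecker_of_parallel hc hne hs ht hloop hout hin) hnk

lemma coeff_mul_arr_self_of_forall (hg : IsGentle Q P) {f₁ f₂ : A ≃ₐ[k] A} {α : Q.A}
    (h : ∀ ρ, ρ ≠ α → pp.coeff f₂ (arrGam Q P ρ) (arrGam Q P α) = 0 ∨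
      pp.coeff f₁ (arrGam Q P α) (arrGam Q P ρ) = 0) :
    pp.coeff (f₁ * f₂) (arrGam Q P α) (arrGam Q P α) =
      pp.coeff f₁ (arrGam Q P α) (arrGam Q P α) * pp.coeff f₂ (arrGam Q P α) (arrGam Q P α) := by
  rw [pp.coeff_mul_arr hg, Finset.sum_eq_single α, mul_comm]
  · intro ρ _ hρ
    rcases h ρ hρ with h0 | h0 <;> simp [h0]
  · simp

lemma coeff_mul_arr_self (hg : IsGentle Q P) (hc : Connected Q) (hnk : ¬ IsKronecker Q)
    {f₁ f₂ : A ≃ₐ[k] A} (hf₁ : pp.MemAutStar f₁) (hf₂ : pp.MemAutStar f₂) (α : Q.A) :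
    pp.coeff (f₁ * f₂) (arrGam Q P α) (arrGam Q P α) =
      pp.coeff f₁ (arrGam Q P α) (arrGam Q P α) * pp.coeff f₂ (arrGam Q P α) (arrGam Q P α) :=
  pp.coeff_mul_arr_self_of_forall hg fun _ hρ =>
    (pp.coeff_triangular hg hc hnk (Ne.symm hρ)).imp (· f₂ hf₂) (· f₁ hf₁)

/-- Depending on the direction in which the column of `α` is triangular, the product formula is
applied to `f⁻¹ * f` or to `f * f⁻¹`. -/
lemma coeff_inv_mul_coeff (hg : IsGentle Q P) (hc : Connected Q) (hnk : ¬ IsKronecker Q)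
    {f : A ≃ₐ[k] A} (hf : pp.MemAutStar f) (α : Q.A) :
    pp.coeff f⁻¹ (arrGam Q P α) (arrGam Q P α) * pp.coeff f (arrGam Q P α) (arrGam Q P α) = 1 := by
  by_cases h : ∀ ρ, ρ ≠ α → pp.coeff f (arrGam Q P ρ) (arrGam Q P α) = 0
  · rw [← pp.coeff_mul_arr_self_of_forall hg fun ρ hρ => Or.inl (h ρ hρ), inv_mul_cancel,
      coeff_one_self]
  push Not at h
  obtain ⟨ρ₀, hne, hρ₀⟩ := h
  have hpar : Q.src ρ₀ = Q.src α ∧ Q.tgt ρ₀ = Q.tgt α := by_contra fun hp =>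
    hρ₀ (pp.coeff_arr_eq_zero_of_not_parallel hf.1 hp)
  have hkill := (pp.coeff_triangular hg hc hnk hne.symm).resolve_left fun H => hρ₀ (H f hf)
  rw [mul_comm, ← pp.coeff_mul_arr_self_of_forall hg fun ρ hρ => ?_, mul_inv_cancel,
    coeff_one_self]
  by_cases hρ₁ : ρ = ρ₀
  · exact Or.inr (hρ₁ ▸ hkill f hf)
  refine Or.inl (pp.coeff_arr_eq_zero_of_not_parallel (pp.memAutL_inv hf.1) fun hp => ?_)
  rcases hg.eq_or_eq_of_src_eq hne.symm hpar.1 hp.1 with h | h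
  exacts [hρ h, hρ₁ h]

lemma MemAutStar.mul (hg : IsGentle Q P) (hc : Connected Q) (hnk : ¬ IsKronecker Q)
    {f₁ f₂ : A ≃ₐ[k] A} (hf₁ : pp.MemAutStar f₁) (hf₂ : pp.MemAutStar f₂) :
    pp.MemAutStar (f₁ * f₂) :=
  ⟨fun v => by rw [AlgEquiv.mul_apply, hf₂.1 v, hf₁.1 v], fun a => by
    rw [pp.coeff_mul_arr_self hg hc hnk hf₁ hf₂ a]
    exact mul_ne_zero (hf₁.2 a) (hf₂.2 a)⟩

lemma MemAutStar.inv (hg : IsGentle Q P) (hc : Connected Q) (hnk : ¬ IsKronecker Q)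
    {f : A ≃ₐ[k] A} (hf : pp.MemAutStar f) : pp.MemAutStar f⁻¹ :=
  ⟨pp.memAutL_inv hf.1, fun a =>
    left_ne_zero_of_mul_eq_one (pp.coeff_inv_mul_coeff hg hc hnk hf a)⟩

end Triangular

section Scaling

noncomputable def scaleEquiv (c : Q.A → kˣ) : A ≃ₗ[k] A :=
  pp.bas.equiv (pp.bas.unitsSMul fun C => pathWeight c C.1) (Equiv.refl _)

lemma scaleEquiv_bas (c : Q.A → kˣ) (C : Gam Q P) :
    pp.scaleEquiv c (pp.bas C) = ((pathWeight c C.1 : kˣ) : k) • pp.bas C := by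
  simp [scaleEquiv, Module.Basis.unitsSMul_apply, Units.smul_def]

lemma scaleEquiv_bas_mul_bas (c : Q.A → kˣ) (C D : Gam Q P) :
    pp.scaleEquiv c (pp.bas C * pp.bas D) =
      pp.scaleEquiv c (pp.bas C) * pp.scaleEquiv c (pp.bas D) := by
  rw [scaleEquiv_bas, scaleEquiv_bas, smul_mul_smul_comm, pp.mul_bas]
  rcases h : pcomp Q C.1 D.1 with _ | p
  · simp
  by_cases hp : pthOk Q P p
  · obtain ⟨E, rfl⟩ : ∃ E : Gam Q P, E.1 = p := ⟨⟨p, hp⟩, rfl⟩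
    simp [basImg_val, scaleEquiv_bas, pathWeight_of_pcomp_eq_some c h]
  · simp [basImg_of_not_pthOk pp hp]

noncomputable def scaleAut (c : Q.A → kˣ) : A ≃ₐ[k] A :=
  AlgEquiv.ofLinearEquiv (pp.scaleEquiv c)
    (by simp [pp.one_bas, scaleEquiv_bas, pathWeight_trivGam])
    (pp.bas.map_mul_of_forall (pp.scaleEquiv c).toLinearMap (pp.scaleEquiv_bas_mul_bas c))

lemma scaleAut_bas (c : Q.A → kˣ) (C : Gam Q P) :
    pp.scaleAut c (pp.bas C) = ((pathWeight c C.1 : kˣ) : k) • pp.bas C :=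
  pp.scaleEquiv_bas c C

noncomputable def scaleHom : (Q.A → kˣ) →* (A ≃ₐ[k] A) where
  toFun := pp.scaleAut
  map_one' := pp.algEquiv_ext fun C => by simp [scaleAut_bas, pathWeight_one]
  map_mul' c d := pp.algEquiv_ext fun C => by
    simp [scaleAut_bas, pathWeight_mul, smul_smul, mul_comm]

lemma scaleHom_apply (c : Q.A → kˣ) : pp.scaleHom c = pp.scaleAut c := rfl

lemma coeff_scaleAut_arr_self (c : Q.A → kˣ) (a : Q.A) :
    pp.coeff (pp.scaleAut c) (arrGam Q P a) (arrGam Q P a) = c a := by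
  simp [coeff, scaleAut_bas, pathWeight_arrGam]

lemma scaleAut_memSQ1 (c : Q.A → kˣ) : pp.MemSQ1 (pp.scaleAut c) :=
  ⟨⟨fun v => by simp [e, scaleAut_bas, pathWeight_trivGam], fun a => by
    simp [coeff_scaleAut_arr_self]⟩, fun a => ⟨c a, by simp [scaleAut_bas, pathWeight_arrGam]⟩⟩

lemma memSQ1_iff_exists_scaleAut {f : A ≃ₐ[k] A} : pp.MemSQ1 f ↔ ∃ c, pp.scaleAut c = f := by
  refine ⟨fun hf => ?_, fun ⟨c, hc⟩ => hc ▸ pp.scaleAut_memSQ1 c⟩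
  choose c hc using hf.2
  exact ⟨c, pp.ext_of_memAutL (pp.scaleAut_memSQ1 c).1.1 hf.1.1 fun a => by
    simp [scaleAut_bas, pathWeight_arrGam, hc a]⟩

lemma scaleHom_injective : Function.Injective pp.scaleHom := fun c d h =>
  funext fun a => Units.ext <| by
    simpa [scaleHom_apply, coeff_scaleAut_arr_self] using
      congrArg (fun f => pp.coeff f (arrGam Q P a) (arrGam Q P a)) h

end Scaling

section Semidirect

variable [Fintype (Gam Q P)] (hg : IsGentle Q P) (hc : Connected Q) (hnk : ¬ IsKronecker Q)

def autStar : Subgroup (A ≃ₐ[k] A) where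
  carrier := {f | pp.MemAutStar f}
  mul_mem' := MemAutStar.mul pp hg hc hnk
  one_mem' := ⟨fun _ => rfl, fun a => by simp [coeff_one_self]⟩
  inv_mem' := MemAutStar.inv pp hg hc hnk

noncomputable def arrowDiag : pp.autStar hg hc hnk →* (Q.A → kˣ) where
  toFun f a := Units.mk0 (pp.coeff f (arrGam Q P a) (arrGam Q P a)) (f.2.2 a)
  map_one' := funext fun _ => Units.ext (pp.coeff_one_self _)
  map_mul' f g := funext fun a => Units.ext (pp.coeff_mul_arr_self hg hc hnk f.2 g.2 a)

noncomputable def scaleStar : (Q.A → kˣ) →* pp.autStar hg hc hnk :=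
  pp.scaleHom.codRestrict _ fun c => (pp.scaleAut_memSQ1 c).1

lemma arrowDiag_scaleStar (c : Q.A → kˣ) :
    pp.arrowDiag hg hc hnk (pp.scaleStar hg hc hnk c) = c :=
  funext fun a => Units.ext (pp.coeff_scaleAut_arr_self c a)

lemma mem_map_ker_arrowDiag_iff {f : A ≃ₐ[k] A} :
    f ∈ (pp.arrowDiag hg hc hnk).ker.map (pp.autStar hg hc hnk).subtype ↔ pp.MemNA f := by
  constructor
  · rintro ⟨f, hf, rfl⟩
    exact ⟨f.2, fun a => congrArg Units.val (congrFun hf a)⟩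
  · intro hf
    exact ⟨⟨f, hf.1⟩, funext fun a => Units.ext (hf.2 a), rfl⟩

end Semidirect

end PathAlgPresentation

theorem autStar_semidirect_general
    (k : Type) [Field k] (Q : Quiv) (P : Rels Q)
    (A : Type) [Ring A] [Algebra k A]
    (pp : PathAlgPresentation k Q P A) (hg : IsGentle Q P)
    (hc : Connected Q) (hnk : ¬ IsKronecker Q) :
    ∃ (Gs S N : Subgroup (A ≃ₐ[k] A)),
      ((Gs : Set (A ≃ₐ[k] A)) = {f | pp.MemAutStar f}) ∧
      ((S : Set (A ≃ₐ[k] A)) = {f | pp.MemSQ1 f}) ∧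
      ((N : Set (A ≃ₐ[k] A)) = {f | pp.MemNA f}) ∧
      S ≤ Gs ∧ N ≤ Gs ∧
      (∀ f ∈ Gs, ∀ h ∈ N, f * h * f⁻¹ ∈ N) ∧
      (∀ f : A ≃ₐ[k] A, f ∈ S → f ∈ N → f = 1) ∧
      (∀ f ∈ Gs, ∃ h ∈ N, ∃ g ∈ S, f = h * g) ∧
      ∃ iso : (Q.A → kˣ) ≃* ↥S, ∀ (c : Q.A → kˣ) (a : Q.A),
        ((iso c : A ≃ₐ[k] A) (pp.bas (arrGam Q P a)) = (c a : k) • pp.bas (arrGam Q P a)) := by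
  let _ : Fintype (Gam Q P) := @Fintype.ofFinite _ hg.finite_gam
  set d := pp.arrowDiag hg hc hnk
  set s := pp.scaleStar hg hc hnk
  refine ⟨pp.autStar hg hc hnk, pp.scaleHom.range, d.ker.map (pp.autStar hg hc hnk).subtype, rfl,
    Set.ext fun _ => pp.memSQ1_iff_exists_scaleAut.symm,
    Set.ext fun _ => pp.mem_map_ker_arrowDiag_iff hg hc hnk, ?_, Subgroup.map_subtype_le _,
    ?_, ?_, ?_, MonoidHom.ofInjective pp.scaleHom_injective, fun c a => ?_⟩
  · rintro _ ⟨c, rfl⟩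
    exact (s c).2
  · rintro f hf _ ⟨n, hn, rfl⟩
    let F : pp.autStar hg hc hnk := ⟨f, hf⟩
    exact ⟨F * n * F⁻¹, d.normal_ker.conj_mem n hn F, rfl⟩
  · rintro _ ⟨c, rfl⟩ ⟨n, hn, hnc⟩
    obtain rfl : n = s c := Subtype.ext hnc
    rw [← pp.arrowDiag_scaleStar hg hc hnk c, MonoidHom.mem_ker.mp hn, map_one]
  · intro f hf
    set c := d ⟨f, hf⟩
    have hker : ⟨f, hf⟩ * s c⁻¹ ∈ d.ker := by
      rw [MonoidHom.mem_ker, map_mul, pp.arrowDiag_scaleStar, mul_inv_cancel]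
    refine ⟨_, ⟨_, hker, rfl⟩, pp.scaleHom c, ⟨c, rfl⟩, ?_⟩
    change f = f * pp.scaleHom c⁻¹ * pp.scaleHom c
    rw [mul_assoc, ← map_mul, inv_mul_cancel, map_one, mul_one]
  · rw [MonoidHom.ofInjective_apply, scaleHom_apply, scaleAut_bas, pathWeight_arrGam]

/-- `Aut₊^l(A) = S(Q₁) ⋉ N(A)`, with `S(Q₁) ≅ (k*)^{#Q₁}` via rescaling of arrows. -/
theorem autStar_semidirect
    (k : Type) [Field k] [IsAlgClosed k] (Q : Quiv) (P : Rels Q)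
    (A : Type) [Ring A] [Algebra k A]
    (pp : PathAlgPresentation k Q P A) (hg : IsGentle Q P)
    (hc : Connected Q) (hnk : ¬ IsKronecker Q) :
    ∃ (Gs S N : Subgroup (A ≃ₐ[k] A)),
      ((Gs : Set (A ≃ₐ[k] A)) = {f | pp.MemAutStar f}) ∧
      ((S : Set (A ≃ₐ[k] A)) = {f | pp.MemSQ1 f}) ∧
      ((N : Set (A ≃ₐ[k] A)) = {f | pp.MemNA f}) ∧
      S ≤ Gs ∧ N ≤ Gs ∧
      (∀ f ∈ Gs, ∀ h ∈ N, f * h * f⁻¹ ∈ N) ∧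
      (∀ f : A ≃ₐ[k] A, f ∈ S → f ∈ N → f = 1) ∧
      (∀ f ∈ Gs, ∃ h ∈ N, ∃ g ∈ S, f = h * g) ∧
      ∃ iso : (Q.A → kˣ) ≃* ↥S, ∀ (c : Q.A → kˣ) (a : Q.A),
        ((iso c : A ≃ₐ[k] A) (pp.bas (arrGam Q P a)) = (c a : k) • pp.bas (arrGam Q P a)) :=
  autStar_semidirect_general k Q P A pp hg hc hnk

end GentlePaper
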